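/- Assume each conjugate ℓ_i* is γ-strongly convex with γ > 0, and let α* ∈ ℝ^n maximize D. Then for every real σ ≥ σ_min and every α ∈ ℝ^n: Σ_{k=1}^K ε_{D,k}(α) ≥ (λnγ/(σ + λnγ))·(D(α*) − D(α)). -/

import Mathlib

/-!
Put `s = λnγ / (σ + λnγ)` and `v = α + s • (α* - α)`. Updating every block of `α` to the
corresponding block of `v` independently gains, in total, `D v - D α` minus the coupling
`(λ/2) (Σ_k ‖A_[k] Δ_[k]‖² - ‖A Δ‖²)` with `Δ = v - α`, and by the definition of `σ_min` this
coupling is at most `σ ‖Δ‖² / (2λn²)`. Strong convexity of the `ℓ_i*` makes `D` strongly concave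
with modulus `γ/n`, so `D v - D α ≥ s (D α* - D α) + γ s (1 - s) ‖α* - α‖² / (2n)`; the value of
`s` is exactly the one for which this surplus pays for the coupling.
-/

open Finset MeasureTheory

noncomputable section

/-- Squared Euclidean norm of a finite real vector. -/
def sqnorm {m : ℕ} (v : Fin m → ℝ) : ℝ := ∑ j, v j ^ 2

/-- Euclidean norm of a finite real vector. -/
def euclNorm {m : ℕ} (v : Fin m → ℝ) : ℝ := Real.sqrt (sqnorm v)

/-- Euclidean inner product. -/
def dotp {m : ℕ} (u v : Fin m → ℝ) : ℝ := ∑ j, u j * v j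

/-- `g` is the (real-valued) Fenchel conjugate of `f`:
`g u` is the least upper bound of `z ↦ u*z - f z`. -/
def IsFenchelConj (f g : ℝ → ℝ) : Prop :=
  ∀ u : ℝ, IsLUB (Set.range fun z : ℝ => u * z - f z) (g u)

/-- `f` is smooth with constant `c`: differentiable with `c`-Lipschitz derivative. -/
def SmoothWith (c : ℝ) (f : ℝ → ℝ) : Prop :=
  Differentiable ℝ f ∧ ∀ z z' : ℝ, |deriv f z - deriv f z'| ≤ c * |z - z'|

/-- `g : ℝ → ℝ` is `γ`-strongly convex. -/
def StrongConvexWith (γ : ℝ) (g : ℝ → ℝ) : Prop :=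
  ConvexOn ℝ Set.univ fun u => g u - γ / 2 * u ^ 2

variable {n d K : ℕ}

/-- `A α` where the `i`-th column of `A` is `x i / (λ n)`. -/
def matA (lam : ℝ) (x : Fin n → Fin d → ℝ) (α : Fin n → ℝ) : Fin d → ℝ :=
  ∑ i, (α i / (lam * n)) • x i

/-- The block-`k` subvector `α_[k]` of `α`. -/
def blkOf (part : Fin n → Fin K) (k : Fin K) (α : Fin n → ℝ) :
    {i : Fin n // part i = k} → ℝ :=
  fun i => α i.1

/-- `A_[k] β`: the block-`k` submatrix of `A` applied to a block-`k` vector. -/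
def blkA (lam : ℝ) (x : Fin n → Fin d → ℝ) (part : Fin n → Fin K) (k : Fin K)
    (β : {i : Fin n // part i = k} → ℝ) : Fin d → ℝ :=
  ∑ i : {i : Fin n // part i = k}, (β i / (lam * n)) • x i.1

/-- `α⟨k←β⟩`: replace the block-`k` coordinates of `α` by `β`. -/
def updBlk (part : Fin n → Fin K) (k : Fin K) (α : Fin n → ℝ)
    (β : {i : Fin n // part i = k} → ℝ) : Fin n → ℝ :=
  fun i => if h : part i = k then β ⟨i, h⟩ else α i

/-- `ι_k β`: zero-padding of a block-`k` vector to a full vector. -/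
def padBlk (part : Fin n → Fin K) (k : Fin K)
    (β : {i : Fin n // part i = k} → ℝ) : Fin n → ℝ :=
  fun i => if h : part i = k then β ⟨i, h⟩ else 0

/-- The primal objective `P(w)`. -/
def primalObj (lam : ℝ) (x : Fin n → Fin d → ℝ) (l : Fin n → ℝ → ℝ)
    (w : Fin d → ℝ) : ℝ :=
  lam / 2 * sqnorm w + (1 / (n : ℝ)) * ∑ i, l i (dotp w (x i))

/-- The dual objective `D(α)`. -/
def dualObj (lam : ℝ) (x : Fin n → Fin d → ℝ) (lstar : Fin n → ℝ → ℝ)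
    (α : Fin n → ℝ) : ℝ :=
  -(lam / 2) * sqnorm (matA lam x α) - (1 / (n : ℝ)) * ∑ i, lstar i (-(α i))

/-- The local suboptimality `ε_{D,k}(α)` on block `k`. -/
def epsD (lam : ℝ) (x : Fin n → Fin d → ℝ) (lstar : Fin n → ℝ → ℝ)
    (part : Fin n → Fin K) (k : Fin K) (α : Fin n → ℝ) : ℝ :=
  ⨆ β : {i : Fin n // part i = k} → ℝ,
    dualObj lam x lstar (updBlk part k α β) - dualObj lam x lstar α

/-- `σ_min`: the supremum over nonzero `α` of
`λ²n²·(Σ_k ‖A_[k]α_[k]‖² − ‖Aα‖²)/‖α‖²`. -/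
def sigmaMin (lam : ℝ) (x : Fin n → Fin d → ℝ) (part : Fin n → Fin K) : ℝ :=
  sSup { r : ℝ | ∃ α : Fin n → ℝ, α ≠ 0 ∧
    r = lam ^ 2 * (n : ℝ) ^ 2 *
      ((∑ k, sqnorm (blkA lam x part k (blkOf part k α))) - sqnorm (matA lam x α)) /
        sqnorm α }

/-- The local dual objective `D_k(β; w̄)` on block `k`. -/
def locDual (lam : ℝ) (x : Fin n → Fin d → ℝ) (lstar : Fin n → ℝ → ℝ)
    (part : Fin n → Fin K) (k : Fin K) (wbar : Fin d → ℝ)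
    (β : {i : Fin n // part i = k} → ℝ) : ℝ :=
  -(lam / 2) * sqnorm (wbar + blkA lam x part k β)
    - (1 / (n : ℝ)) * ∑ i : {i : Fin n // part i = k}, lstar i.1 (-(β i))
    + lam / 2 * sqnorm wbar

/-- The local primal objective `P_k(v; w̄)` on block `k`. -/
def locPrimal (lam : ℝ) (x : Fin n → Fin d → ℝ) (l : Fin n → ℝ → ℝ)
    (part : Fin n → Fin K) (k : Fin K) (wbar v : Fin d → ℝ) : ℝ :=
  (1 / (n : ℝ)) * ∑ i : {i : Fin n // part i = k}, l i.1 (dotp (wbar + v) (x i.1))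
    + lam / 2 * sqnorm v

/-- Run `H` iterations of the coordinate-wise step `st`, where `ω` lists
the (randomly chosen) coordinates used in the successive iterations. -/
def iterRun {γ : Type*} {ι : Type*} (st : ι → γ → γ) :
    (H : ℕ) → (Fin H → ι) → γ → γ
  | 0, _, b => b
  | H + 1, ω, b => iterRun st H (fun h => ω h.succ) (st (ω 0) b)

section Vectors

variable {m : ℕ}

lemma sqnorm_nonneg (v : Fin m → ℝ) : 0 ≤ sqnorm v :=
  sum_nonneg fun _ _ => sq_nonneg _

lemma sqnorm_pos {v : Fin m → ℝ} (hv : v ≠ 0) : 0 < sqnorm v := by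
  obtain ⟨j, hj⟩ := Function.ne_iff.1 hv
  exact lt_of_lt_of_le (pow_pos (abs_pos.2 hj) 2 |>.trans_eq (sq_abs _))
    (single_le_sum (fun i _ => sq_nonneg (v i)) (mem_univ j))

@[simp]
lemma sqnorm_zero : sqnorm (0 : Fin m → ℝ) = 0 := by simp [sqnorm]

lemma sqnorm_add (u w : Fin m → ℝ) :
    sqnorm (u + w) = sqnorm u + 2 * dotp u w + sqnorm w := by
  simp only [sqnorm, dotp, Pi.add_apply, mul_sum, ← sum_add_distrib]
  exact sum_congr rfl fun _ _ => by ring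

lemma sqnorm_smul (c : ℝ) (u : Fin m → ℝ) : sqnorm (c • u) = c ^ 2 * sqnorm u := by
  simp only [sqnorm, Pi.smul_apply, smul_eq_mul, mul_sum, mul_pow]

lemma sqnorm_convexComb (s : ℝ) (u w : Fin m → ℝ) :
    sqnorm ((1 - s) • u + s • w)
      = (1 - s) * sqnorm u + s * sqnorm w - s * (1 - s) * sqnorm (u - w) := by
  simp only [sqnorm, Pi.add_apply, Pi.sub_apply, Pi.smul_apply, smul_eq_mul, mul_sum,
    ← sum_add_distrib, ← sum_sub_distrib]
  exact sum_congr rfl fun _ _ => by ring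

lemma dotp_sum {ι : Type*} (s : Finset ι) (u : Fin m → ℝ) (w : ι → Fin m → ℝ) :
    dotp u (∑ i ∈ s, w i) = ∑ i ∈ s, dotp u (w i) := by
  simp only [dotp, Finset.sum_apply, mul_sum]
  exact sum_comm

lemma sqnorm_sum_smul_le {ι : Type*} (s : Finset ι) (c : ι → ℝ) (w : ι → Fin m → ℝ) :
    sqnorm (∑ i ∈ s, c i • w i) ≤ (∑ i ∈ s, c i ^ 2) * ∑ i ∈ s, sqnorm (w i) := by
  calc sqnorm (∑ i ∈ s, c i • w i)
      = ∑ j, (∑ i ∈ s, c i * w i j) ^ 2 := by simp [sqnorm, Finset.sum_apply]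
    _ ≤ ∑ j, (∑ i ∈ s, c i ^ 2) * ∑ i ∈ s, w i j ^ 2 :=
        sum_le_sum fun j _ => sum_mul_sq_le_sq_mul_sq s c (w · j)
    _ = (∑ i ∈ s, c i ^ 2) * ∑ i ∈ s, sqnorm (w i) := by
        simp only [sqnorm, ← mul_sum, sum_comm (s := s)]

end Vectors

section Blocks

variable {lam : ℝ} {x : Fin n → Fin d → ℝ} {part : Fin n → Fin K}

lemma matA_add (u w : Fin n → ℝ) : matA lam x (u + w) = matA lam x u + matA lam x w := by
  simp only [matA, Pi.add_apply, add_div, add_smul, sum_add_distrib]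

lemma matA_smul (c : ℝ) (u : Fin n → ℝ) : matA lam x (c • u) = c • matA lam x u := by
  simp only [matA, Pi.smul_apply, smul_eq_mul, mul_div_assoc, mul_smul, smul_sum]

lemma blkA_zero (k : Fin K) : blkA lam x part k 0 = 0 := by simp [blkA]

lemma sum_eq_sum_block {M : Type*} [AddCommMonoid M] (part : Fin n → Fin K) (k : Fin K)
    (g : Fin n → M) (hg : ∀ i, part i ≠ k → g i = 0) :
    ∑ i, g i = ∑ i : {i : Fin n // part i = k}, g i := by
  rw [← Fintype.sum_subtype_add_sum_subtype (fun i => part i = k) g,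
    Fintype.sum_eq_zero (fun i : {i // ¬part i = k} => g i) fun i => hg i i.2, add_zero]

lemma matA_padBlk (k : Fin K) (β : {i : Fin n // part i = k} → ℝ) :
    matA lam x (padBlk part k β) = blkA lam x part k β := by
  rw [matA, sum_eq_sum_block part k _ fun i hi => by simp [padBlk, hi]]
  exact sum_congr rfl fun i _ => by simp [padBlk, i.2]

lemma updBlk_eq_add_padBlk (k : Fin K) (α : Fin n → ℝ) (β : {i : Fin n // part i = k} → ℝ) :
    updBlk part k α β = α + padBlk part k (β - blkOf part k α) := by
  funext i
  by_cases h : part i = k <;> simp [updBlk, padBlk, blkOf, h]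

lemma matA_updBlk (k : Fin K) (α : Fin n → ℝ) (β : {i : Fin n // part i = k} → ℝ) :
    matA lam x (updBlk part k α β) = matA lam x α + blkA lam x part k (β - blkOf part k α) := by
  rw [updBlk_eq_add_padBlk, matA_add, matA_padBlk]

lemma sum_blkA_blkOf (v : Fin n → ℝ) : ∑ k, blkA lam x part k (blkOf part k v) = matA lam x v :=
  Fintype.sum_fiberwise part fun i => (v i / (lam * n)) • x i

lemma sum_updBlk_sub (f : Fin n → ℝ → ℝ) (k : Fin K) (α : Fin n → ℝ)
    (β : {i : Fin n // part i = k} → ℝ) :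
    ∑ i, f i (updBlk part k α β i) - ∑ i, f i (α i)
      = ∑ i : {i : Fin n // part i = k}, (f i (β i) - f i (α i)) := by
  rw [← sum_sub_distrib, sum_eq_sum_block part k _ fun i hi => by simp [updBlk, hi]]
  exact sum_congr rfl fun i _ => by simp [updBlk, i.2]

end Blocks

def blockDefect (lam : ℝ) (x : Fin n → Fin d → ℝ) (part : Fin n → Fin K) (v : Fin n → ℝ) : ℝ :=
  (∑ k, sqnorm (blkA lam x part k (blkOf part k v))) - sqnorm (matA lam x v)

lemma StrongConvexWith.apply_convexComb_le {γ : ℝ} {g : ℝ → ℝ} (hg : StrongConvexWith γ g)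
    (a b : ℝ) {s : ℝ} (hs0 : 0 ≤ s) (hs1 : s ≤ 1) :
    g ((1 - s) * a + s * b) ≤ (1 - s) * g a + s * g b - γ / 2 * (s * (1 - s)) * (b - a) ^ 2 := by
  have h := hg.2 (Set.mem_univ a) (Set.mem_univ b) (sub_nonneg.2 hs1) hs0 (sub_add_cancel 1 s)
  simp only [smul_eq_mul] at h
  linear_combination h

section DualObjective

variable {lam : ℝ} {x : Fin n → Fin d → ℝ} {lstar : Fin n → ℝ → ℝ} {part : Fin n → Fin K}

lemma dualObj_sub (α v : Fin n → ℝ) :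
    dualObj lam x lstar v - dualObj lam x lstar α
      = -lam * dotp (matA lam x α) (matA lam x (v - α)) - lam / 2 * sqnorm (matA lam x (v - α))
        - 1 / n * ∑ i, (lstar i (-v i) - lstar i (-α i)) := by
  have hv : matA lam x v = matA lam x α + matA lam x (v - α) := by
    rw [← matA_add, add_sub_cancel]
  rw [dualObj, dualObj, hv, sqnorm_add, sum_sub_distrib]
  ring

lemma dualObj_updBlk_sub (k : Fin K) (α : Fin n → ℝ) (β : {i : Fin n // part i = k} → ℝ) :
    dualObj lam x lstar (updBlk part k α β) - dualObj lam x lstar α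
      = -lam * dotp (matA lam x α) (blkA lam x part k (β - blkOf part k α))
        - lam / 2 * sqnorm (blkA lam x part k (β - blkOf part k α))
        - 1 / n * ∑ i : {i : Fin n // part i = k}, (lstar i (-β i) - lstar i (-α i)) := by
  rw [dualObj, dualObj, matA_updBlk, sqnorm_add,
    ← sum_updBlk_sub (fun i a => lstar i (-a)) k α β]
  ring

lemma sum_dualObj_updBlk_sub (α v : Fin n → ℝ) :
    ∑ k, (dualObj lam x lstar (updBlk part k α (blkOf part k v)) - dualObj lam x lstar α)
      = dualObj lam x lstar v - dualObj lam x lstar α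
        - lam / 2 * blockDefect lam x part (v - α) := by
  have hblock : ∀ k, dualObj lam x lstar (updBlk part k α (blkOf part k v)) - dualObj lam x lstar α
      = -lam * dotp (matA lam x α) (blkA lam x part k (blkOf part k (v - α)))
        - lam / 2 * sqnorm (blkA lam x part k (blkOf part k (v - α)))
        - 1 / n * ∑ i : {i : Fin n // part i = k}, (lstar i (-v i) - lstar i (-α i)) :=
    fun k => dualObj_updBlk_sub k α (blkOf part k v)
  rw [sum_congr rfl fun k _ => hblock k, sum_sub_distrib, sum_sub_distrib, ← mul_sum, ← mul_sum,
    ← mul_sum, ← dotp_sum, sum_blkA_blkOf,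
    Fintype.sum_fiberwise part (fun i => lstar i (-v i) - lstar i (-α i)), dualObj_sub, blockDefect]
  ring

lemma dualObj_convexComb_ge (hlam : 0 ≤ lam) {γ : ℝ} (hstrong : ∀ i, StrongConvexWith γ (lstar i))
    (a b : Fin n → ℝ) {s : ℝ} (hs0 : 0 ≤ s) (hs1 : s ≤ 1) :
    (1 - s) * dualObj lam x lstar a + s * dualObj lam x lstar b
        + γ / (2 * n) * (s * (1 - s)) * sqnorm (b - a)
      ≤ dualObj lam x lstar ((1 - s) • a + s • b) := by
  have hconj : ∑ i, lstar i (-((1 - s) • a + s • b) i)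
      ≤ (1 - s) * ∑ i, lstar i (-a i) + s * ∑ i, lstar i (-b i)
        - γ / 2 * (s * (1 - s)) * sqnorm (b - a) := by
    calc ∑ i, lstar i (-((1 - s) • a + s • b) i)
        ≤ ∑ i, ((1 - s) * lstar i (-a i) + s * lstar i (-b i)
            - γ / 2 * (s * (1 - s)) * (b i - a i) ^ 2) := by
          refine sum_le_sum fun i _ => ?_
          have h := (hstrong i).apply_convexComb_le (-a i) (-b i) hs0 hs1
          have harg : (1 - s) * -a i + s * -b i = -((1 - s) • a + s • b) i := by
            simp only [Pi.add_apply, Pi.smul_apply, smul_eq_mul]; ring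
          rwa [harg, show (-b i - -a i) ^ 2 = (b i - a i) ^ 2 by ring] at h
      _ = _ := by simp only [sqnorm, Pi.sub_apply, sum_sub_distrib, sum_add_distrib, mul_sum]
  have hquad := mul_nonneg (mul_nonneg hs0 (sub_nonneg.2 hs1))
    (sqnorm_nonneg (matA lam x a - matA lam x b))
  rw [dualObj, dualObj, dualObj, matA_add, matA_smul, matA_smul, sqnorm_convexComb]
  linear_combination (lam / 2) * hquad + (1 / n) * hconj

lemma sub_le_epsD {αstar : Fin n → ℝ}
    (hstar : ∀ α, dualObj lam x lstar α ≤ dualObj lam x lstar αstar)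
    (k : Fin K) (α : Fin n → ℝ) (β : {i : Fin n // part i = k} → ℝ) :
    dualObj lam x lstar (updBlk part k α β) - dualObj lam x lstar α
      ≤ epsD lam x lstar part k α :=
  le_ciSup (f := fun β => dualObj lam x lstar (updBlk part k α β) - dualObj lam x lstar α)
    ⟨dualObj lam x lstar αstar - dualObj lam x lstar α, by
      rintro _ ⟨β, rfl⟩; exact sub_le_sub_right (hstar _) _⟩ β

end DualObjective

section SigmaMin

variable {lam : ℝ} {x : Fin n → Fin d → ℝ} {part : Fin n → Fin K}

lemma sigmaMin_eq_sSup_blockDefect :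
    sigmaMin lam x part = sSup {r : ℝ | ∃ α : Fin n → ℝ, α ≠ 0 ∧
      r = lam ^ 2 * (n : ℝ) ^ 2 * blockDefect lam x part α / sqnorm α} :=
  rfl

lemma sum_sqnorm_blkA_le (v : Fin n → ℝ) :
    ∑ k, sqnorm (blkA lam x part k (blkOf part k v))
      ≤ (∑ i, sqnorm (x i)) * ∑ i, (v i / (lam * n)) ^ 2 := by
  have hblock : ∀ k, ∑ i : {i : Fin n // part i = k}, sqnorm (x i) ≤ ∑ i, sqnorm (x i) := by
    intro k
    rw [← Fintype.sum_subtype_add_sum_subtype (fun i => part i = k) (fun i => sqnorm (x i))]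
    exact le_add_of_nonneg_right (sum_nonneg fun i _ => sqnorm_nonneg _)
  calc ∑ k, sqnorm (blkA lam x part k (blkOf part k v))
      ≤ ∑ k, (∑ i : {i : Fin n // part i = k}, (v i / (lam * n)) ^ 2) * ∑ i, sqnorm (x i) :=
        sum_le_sum fun k _ => (sqnorm_sum_smul_le _ _ _).trans <|
          mul_le_mul_of_nonneg_left (hblock k) (sum_nonneg fun _ _ => sq_nonneg _)
    _ = (∑ i, sqnorm (x i)) * ∑ i, (v i / (lam * n)) ^ 2 := by
        rw [← sum_mul, Fintype.sum_fiberwise part fun i => (v i / (lam * n)) ^ 2, mul_comm]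

lemma bddAbove_blockDefect_ratio :
    BddAbove {r : ℝ | ∃ α : Fin n → ℝ, α ≠ 0 ∧
      r = lam ^ 2 * (n : ℝ) ^ 2 * blockDefect lam x part α / sqnorm α} := by
  refine ⟨∑ i, sqnorm (x i), ?_⟩
  rintro r ⟨v, hv, rfl⟩
  have hscale : (lam * n) ^ 2 * ∑ i, (v i / (lam * n)) ^ 2 ≤ sqnorm v := by
    rcases eq_or_ne (lam * n) 0 with h | h
    · simpa [h] using sqnorm_nonneg v
    · rw [mul_sum]
      exact le_of_eq (sum_congr rfl fun i _ => by rw [div_pow, mul_div_cancel₀ _ (pow_ne_zero 2 h)])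
  have hM := sum_nonneg fun i (_ : i ∈ univ) => sqnorm_nonneg (x i)
  rw [div_le_iff₀ (sqnorm_pos hv), blockDefect]
  calc lam ^ 2 * (n : ℝ) ^ 2
        * ((∑ k, sqnorm (blkA lam x part k (blkOf part k v))) - sqnorm (matA lam x v))
      ≤ (lam * n) ^ 2 * ((∑ i, sqnorm (x i)) * ∑ i, (v i / (lam * n)) ^ 2) := by
        rw [mul_pow]
        gcongr
        linarith [sum_sqnorm_blkA_le (lam := lam) (x := x) (part := part) v,
          sqnorm_nonneg (matA lam x v)]
    _ ≤ (∑ i, sqnorm (x i)) * sqnorm v := by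
        rw [mul_left_comm]
        exact mul_le_mul_of_nonneg_left hscale hM

lemma blockDefect_single (j : Fin n) (c : ℝ) : blockDefect lam x part (Pi.single j c) = 0 := by
  have hoff : ∀ k ≠ part j, blkA lam x part k (blkOf part k (Pi.single j c)) = 0 := by
    intro k hk
    convert blkA_zero k
    funext i
    simp [blkOf, show i.1 ≠ j from fun h => hk (h ▸ i.2).symm]
  rw [blockDefect, ← sum_blkA_blkOf,
    sum_eq_single (part j) (fun k _ hk => by rw [hoff k hk, sqnorm_zero]) (by simp),
    sum_eq_single (part j) (fun k _ hk => hoff k hk) (by simp), sub_self]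

lemma sigmaMin_nonneg : 0 ≤ sigmaMin lam x part := by
  rcases isEmpty_or_nonempty (Fin n) with hn | ⟨⟨j⟩⟩
  · exact Real.sSup_nonneg fun r ⟨α, hα, _⟩ => absurd (Subsingleton.elim α 0) hα
  · rw [sigmaMin_eq_sSup_blockDefect]
    refine Real.sSup_nonneg' ⟨0, ⟨Pi.single j 1, ?_, ?_⟩, le_rfl⟩
    · simp
    · rw [blockDefect_single]; simp

lemma mul_blockDefect_le {σ : ℝ} (hσ : sigmaMin lam x part ≤ σ) (v : Fin n → ℝ) :
    lam ^ 2 * (n : ℝ) ^ 2 * blockDefect lam x part v ≤ σ * sqnorm v := by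
  rcases eq_or_ne v 0 with rfl | hv
  · simp [blockDefect, blkOf, blkA, matA]
  · rw [← div_le_iff₀ (sqnorm_pos hv)]
    exact (le_csSup bddAbove_blockDefect_ratio ⟨v, hv, rfl⟩).trans hσ

end SigmaMin

lemma div_add_mul_eq_mul_one_sub {σ c : ℝ} (hσ : 0 ≤ σ) (hc : 0 ≤ c) :
    c / (σ + c) * σ = c * (1 - c / (σ + c)) := by
  rcases (add_nonneg hσ hc).eq_or_lt' with h | h
  · obtain rfl : c = 0 := by linarith
    simp
  · field_simp
    ring

theorem sum_eps_ge_fraction_of_gap_general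
    (n d K : ℕ) (hn : 0 < n)
    (lam γ : ℝ) (hlam : 0 < lam) (hγ : 0 < γ)
    (x : Fin n → Fin d → ℝ)
    (lstar : Fin n → ℝ → ℝ)
    (hstrong : ∀ i, StrongConvexWith γ (lstar i))
    (part : Fin n → Fin K)
    (αstar : Fin n → ℝ)
    (hstar : ∀ α, dualObj lam x lstar α ≤ dualObj lam x lstar αstar)
    (σ : ℝ) (hσ : sigmaMin lam x part ≤ σ)
    (α : Fin n → ℝ) :
    lam * n * γ / (σ + lam * n * γ) *
        (dualObj lam x lstar αstar - dualObj lam x lstar α)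
      ≤ ∑ k, epsD lam x lstar part k α := by
  have hσ0 : 0 ≤ σ := sigmaMin_nonneg.trans hσ
  have hc : 0 ≤ lam * n * γ := by positivity
  set s := lam * n * γ / (σ + lam * n * γ)
  have hs0 : 0 ≤ s := by positivity
  have hs1 : s ≤ 1 := div_le_one_of_le₀ (le_add_of_nonneg_left hσ0) (by positivity)
  have hsσ : s * σ = lam * n * γ * (1 - s) := div_add_mul_eq_mul_one_sub hσ0 hc
  set v := (1 - s) • α + s • αstar
  have hstep : v - α = s • (αstar - α) := by
    simp only [v, smul_sub, sub_smul, one_smul]; abel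
  have hconcave := dualObj_convexComb_ge (x := x) hlam.le hstrong α αstar hs0 hs1
  have hdist : sqnorm (v - α) = s ^ 2 * sqnorm (αstar - α) := by rw [hstep, sqnorm_smul]
  have hcoupling : lam / 2 * blockDefect lam x part (v - α)
      ≤ γ / (2 * n) * (s * (1 - s)) * sqnorm (αstar - α) := by
    refine le_of_mul_le_mul_right ?_ (by positivity : (0 : ℝ) < 2 * lam * n ^ 2)
    calc lam / 2 * blockDefect lam x part (v - α) * (2 * lam * n ^ 2)
        = lam ^ 2 * n ^ 2 * blockDefect lam x part (v - α) := by ring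
      _ ≤ σ * sqnorm (v - α) := mul_blockDefect_le hσ (v - α)
      _ = s * (s * σ) * sqnorm (αstar - α) := by rw [hdist]; ring
      _ = _ := by rw [hsσ]; field_simp
  calc s * (dualObj lam x lstar αstar - dualObj lam x lstar α)
      ≤ dualObj lam x lstar v - dualObj lam x lstar α
          - lam / 2 * blockDefect lam x part (v - α) := by
        linarith
    _ = ∑ k, (dualObj lam x lstar (updBlk part k α (blkOf part k v)) - dualObj lam x lstar α) :=
        (sum_dualObj_updBlk_sub α v).symm
    _ ≤ ∑ k, epsD lam x lstar part k α := sum_le_sum fun k _ => sub_le_epsD hstar k α _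

/-- the sum of local suboptimalities dominates a fixed fraction
of the global dual suboptimality. -/
theorem sum_eps_ge_fraction_of_gap
    (n d K : ℕ) (hn : 0 < n) (hd : 0 < d) (hK : 0 < K)
    (lam γ : ℝ) (hlam : 0 < lam) (hγ : 0 < γ)
    (x : Fin n → Fin d → ℝ)
    (l lstar : Fin n → ℝ → ℝ)
    (hconj : ∀ i, IsFenchelConj (l i) (lstar i))
    (hstrong : ∀ i, StrongConvexWith γ (lstar i))
    (part : Fin n → Fin K) (hpart : ∀ k, ∃ i, part i = k)
    (αstar : Fin n → ℝ)
    (hstar : ∀ α, dualObj lam x lstar α ≤ dualObj lam x lstar αstar)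
    (σ : ℝ) (hσ : sigmaMin lam x part ≤ σ)
    (α : Fin n → ℝ) :
    lam * n * γ / (σ + lam * n * γ) *
        (dualObj lam x lstar αstar - dualObj lam x lstar α)
      ≤ ∑ k, epsD lam x lstar part k α :=
  sum_eps_ge_fraction_of_gap_general n d K hn lam γ hlam hγ x lstar hstrong part αstar hstar σ hσ α
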